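/- Let φ be a nonnegative C_c^∞ function on ℝ supported in [-1/2,1/2], even, with ∫_ℝ φ = 1, and set φ_ε(v) = ε⁻¹φ(v/ε). Then for every u, û ∈ ℝ, lim_{ε→0⁺} ∫_ℝ ∫_ℝ φ_ε(v−u)·χ(w,û)·φ_ε(v−w) dw dv = χ(u,û). -/

import Mathlib

open MeasureTheory Filter Set

/-- χ(v,u) = 1 if v < u, 1/2 if v = u, 0 if u < v. -/
noncomputable def chi (v u : ℝ) : ℝ := if v < u then 1 else if v = u then 1/2 else 0

lemma chi_of_lt {v u : ℝ} (h : v < u) : chi v u = 1 := if_pos h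

lemma chi_of_eq {v u : ℝ} (h : v = u) : chi v u = 1/2 := by
  subst h; unfold chi; rw [if_neg (lt_irrefl v), if_pos rfl]

lemma chi_of_gt {v u : ℝ} (h : u < v) : chi v u = 0 := by
  unfold chi; rw [if_neg (by linarith), if_neg (by intro hh; linarith)]

lemma chi_nonneg (v u : ℝ) : 0 ≤ chi v u := by unfold chi; split_ifs <;> norm_num

lemma chi_le_one (v u : ℝ) : chi v u ≤ 1 := by unfold chi; split_ifs <;> norm_num

lemma chi_meas (u : ℝ) : Measurable (fun v => chi v u) := by
  unfold chi
  exact Measurable.ite (measurableSet_lt measurable_id measurable_const) measurable_const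
    (Measurable.ite (measurableSet_eq_fun measurable_id measurable_const)
      measurable_const measurable_const)

lemma chi_add_refl (w u : ℝ) : chi w u + chi (2*u - w) u = 1 := by
  rcases lt_trichotomy w u with h | h | h
  · rw [chi_of_lt h, chi_of_gt (by linarith : u < 2*u - w)]; norm_num
  · rw [chi_of_eq h, chi_of_eq (by linarith : 2*u - w = u)]; norm_num
  · rw [chi_of_gt h, chi_of_lt (by linarith : 2*u - w < u)]; norm_num

section Aux

variable {φ : ℝ → ℝ}

/-- the mollifier at scale ε, reflected around v, is integrable. -/
lemma moll_int_left (hφ : Integrable φ) {ε : ℝ} (hε : ε ≠ 0) (v : ℝ) :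
    Integrable (fun w => ε⁻¹ * φ ((v - w)/ε)) :=
  (((hφ.comp_div hε).comp_sub_left v)).const_mul _

lemma moll_int_right (hφ : Integrable φ) {ε : ℝ} (hε : ε ≠ 0) (c : ℝ) :
    Integrable (fun w => ε⁻¹ * φ ((w - c)/ε)) :=
  (((hφ.comp_div hε).comp_sub_right c)).const_mul _

lemma moll_norm_left (h1 : ∫ w, φ w = 1) {ε : ℝ} (hε : 0 < ε) (v : ℝ) :
    ∫ w, ε⁻¹ * φ ((v - w)/ε) = 1 := by
  rw [integral_const_mul]
  rw [integral_sub_left_eq_self (fun x => φ (x/ε)) volume v]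
  rw [Measure.integral_comp_div φ ε, h1, smul_eq_mul, mul_one, abs_of_pos hε]
  exact inv_mul_cancel₀ (ne_of_gt hε)

lemma moll_norm_right (h1 : ∫ w, φ w = 1) {ε : ℝ} (hε : 0 < ε) (c : ℝ) :
    ∫ w, ε⁻¹ * φ ((w - c)/ε) = 1 := by
  rw [integral_const_mul]
  rw [integral_sub_right_eq_self (fun x => φ (x/ε)) c]
  rw [Measure.integral_comp_div φ ε, h1, smul_eq_mul, mul_one, abs_of_pos hε]
  exact inv_mul_cancel₀ (ne_of_gt hε)

/-- bounded measurable function times mollifier is integrable. -/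
lemma moll_bdd_int (hφ : Integrable φ) {ε : ℝ} (hε : ε ≠ 0) (v : ℝ)
    (ψ : ℝ → ℝ) (hm : Measurable ψ) (hb : ∀ x, ‖ψ x‖ ≤ 1) :
    Integrable (fun w => ψ w * (ε⁻¹ * φ ((v - w)/ε))) :=
  (moll_int_left hφ hε v).bdd_mul hm.aestronglyMeasurable (Filter.Eventually.of_forall hb)

lemma chi_norm_le (w u : ℝ) : ‖chi w u‖ ≤ 1 := by
  rw [Real.norm_eq_abs, abs_of_nonneg (chi_nonneg _ _)]; exact chi_le_one _ _

/-- the smoothed half-integral. -/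
noncomputable def gg (φ : ℝ → ℝ) (ε u : ℝ) (v : ℝ) : ℝ :=
  ∫ w, chi w u * (ε⁻¹ * φ ((v - w)/ε))

lemma gg_meas (hφc : Continuous φ) (ε u : ℝ) :
    AEStronglyMeasurable (gg φ ε u) volume := by
  have hjoint : StronglyMeasurable (fun p : ℝ × ℝ => chi p.2 u * (ε⁻¹ * φ ((p.1 - p.2)/ε))) := by
    apply Measurable.stronglyMeasurable
    exact ((chi_meas u).comp measurable_snd).mul
      (measurable_const.mul (hφc.measurable.comp ((measurable_fst.sub measurable_snd).div_const ε)))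
  exact hjoint.integral_prod_right'.aestronglyMeasurable

lemma gg_nonneg (hφ_nonneg : ∀ w, 0 ≤ φ w) {ε : ℝ} (hε : 0 < ε) (u v : ℝ) :
    0 ≤ gg φ ε u v := by
  apply integral_nonneg
  intro w
  exact mul_nonneg (chi_nonneg _ _) (mul_nonneg (by positivity) (hφ_nonneg _))

lemma gg_le_one (hφ : Integrable φ) (hφ_nonneg : ∀ w, 0 ≤ φ w) (h1 : ∫ w, φ w = 1)
    {ε : ℝ} (hε : 0 < ε) (u v : ℝ) : gg φ ε u v ≤ 1 := by
  have hεne : ε ≠ 0 := ne_of_gt hε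
  calc gg φ ε u v ≤ ∫ w, ε⁻¹ * φ ((v - w)/ε) := by
        apply integral_mono
          (moll_bdd_int hφ hεne v _ (chi_meas u) (fun x => chi_norm_le x u))
          (moll_int_left hφ hεne v)
        intro w
        exact mul_le_of_le_one_left
          (mul_nonneg (by positivity) (hφ_nonneg _)) (chi_le_one _ _)
    _ = 1 := moll_norm_left h1 hε v

lemma gg_norm_le (hφ : Integrable φ) (hφ_nonneg : ∀ w, 0 ≤ φ w) (h1 : ∫ w, φ w = 1)
    {ε : ℝ} (hε : 0 < ε) (u v : ℝ) : ‖gg φ ε u v‖ ≤ 1 := by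
  rw [Real.norm_eq_abs, abs_of_nonneg (gg_nonneg hφ_nonneg hε u v)]
  exact gg_le_one hφ hφ_nonneg h1 hε u v

/-- reflection identity: gg at the reflected point. -/
lemma gg_reflect (hφ_even : ∀ w, φ (-w) = φ w) (ε u v : ℝ) :
    gg φ ε u (2*u - v) = ∫ w, chi (2*u - w) u * (ε⁻¹ * φ ((v - w)/ε)) := by
  unfold gg
  rw [← integral_sub_left_eq_self
    (fun t => chi t u * (ε⁻¹ * φ ((2*u - v - t)/ε))) volume (2*u)]
  refine integral_congr_ae (Filter.Eventually.of_forall fun w => ?_)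
  simp only
  congr 2
  rw [show 2*u - v - (2*u - w) = -(v - w) by ring, neg_div, hφ_even]

/-- the two halves add to one. -/
lemma gg_add_reflect (hφ : Integrable φ) (hφ_even : ∀ w, φ (-w) = φ w) (h1 : ∫ w, φ w = 1)
    {ε : ℝ} (hε : 0 < ε) (u v : ℝ) :
    gg φ ε u v + gg φ ε u (2*u - v) = 1 := by
  have hεne : ε ≠ 0 := ne_of_gt hε
  rw [gg_reflect hφ_even]
  unfold gg
  rw [← integral_add
    (moll_bdd_int hφ hεne v _ (chi_meas u) (fun x => chi_norm_le x u))
    (moll_bdd_int hφ hεne v (fun w => chi (2*u - w) u)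
      ((chi_meas u).comp (measurable_const.sub measurable_id))
      (fun x => chi_norm_le _ u))]
  have heq : ∀ w, chi w u * (ε⁻¹ * φ ((v - w)/ε)) + chi (2*u - w) u * (ε⁻¹ * φ ((v - w)/ε))
      = ε⁻¹ * φ ((v - w)/ε) := fun w => by rw [← add_mul, chi_add_refl, one_mul]
  rw [integral_congr_ae (Filter.Eventually.of_forall heq), moll_norm_left h1 hε v]

end Aux

theorem stmt_1
    (φ : ℝ → ℝ) (hφ_smooth : ContDiff ℝ (⊤ : ℕ∞) φ)
    (hφ_supp : Function.support φ ⊆ Set.Icc (-(1/2)) (1/2))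
    (hφ_nonneg : ∀ w, 0 ≤ φ w)
    (hφ_even : ∀ w, φ (-w) = φ w)
    (hφ_int : ∫ w, φ w = 1)
    (u uh : ℝ) :
    Tendsto
      (fun ε : ℝ =>
        ∫ v, ∫ w, (ε⁻¹ * φ ((v - u) / ε)) * chi w uh * (ε⁻¹ * φ ((v - w) / ε)))
      (nhdsWithin 0 (Set.Ioi 0))
      (nhds (chi u uh)) := by
  have hφc : Continuous φ := hφ_smooth.continuous
  have hφint : Integrable φ := hφc.integrable_of_hasCompactSupport
    (HasCompactSupport.of_support_subset_isCompact isCompact_Icc hφ_supp)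
  have habs : ∀ ε v x : ℝ, 0 < ε → φ ((v - x)/ε) ≠ 0 → -(ε/2) ≤ v - x ∧ v - x ≤ ε/2 := by
    intro ε v x hε h
    have hm := hφ_supp (Function.mem_support.2 h)
    rw [Set.mem_Icc] at hm
    constructor
    · have h2 := hm.1
      rw [le_div_iff₀ hε] at h2
      linarith
    · have h2 := hm.2
      rw [div_le_iff₀ hε] at h2
      linarith
  have main : (fun ε : ℝ =>
        ∫ v, ∫ w, (ε⁻¹ * φ ((v - u) / ε)) * chi w uh * (ε⁻¹ * φ ((v - w) / ε)))
      =ᶠ[nhdsWithin 0 (Set.Ioi 0)] (fun _ => chi u uh) := by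
    rcases lt_trichotomy u uh with hlt | heqc | hgt
    · -- u < uh : integrand has chi = 1 on the support for small ε
      have hmem : Set.Ioo (0:ℝ) (uh - u) ∈ nhdsWithin 0 (Set.Ioi 0) :=
        Ioo_mem_nhdsGT_of_mem ⟨le_refl 0, by linarith⟩
      filter_upwards [hmem] with ε hεm
      obtain ⟨hε0, hεlt⟩ := hεm
      have hpt : ∀ v w : ℝ, (ε⁻¹ * φ ((v - u) / ε)) * chi w uh * (ε⁻¹ * φ ((v - w) / ε))
          = (ε⁻¹ * φ ((v - u) / ε)) * (ε⁻¹ * φ ((v - w) / ε)) := by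
        intro v w
        by_cases h1 : φ ((v - u)/ε) = 0
        · rw [h1]; ring
        by_cases h2 : φ ((v - w)/ε) = 0
        · rw [h2]; ring
        obtain ⟨hb1, hb2⟩ := habs ε v u hε0 h1
        obtain ⟨hb3, hb4⟩ := habs ε v w hε0 h2
        rw [chi_of_lt (show w < uh by linarith)]
        ring
      calc (∫ v, ∫ w, (ε⁻¹ * φ ((v - u) / ε)) * chi w uh * (ε⁻¹ * φ ((v - w) / ε)))
          = ∫ v, ∫ w, (ε⁻¹ * φ ((v - u) / ε)) * (ε⁻¹ * φ ((v - w) / ε)) :=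
            integral_congr_ae (Filter.Eventually.of_forall fun v =>
              integral_congr_ae (Filter.Eventually.of_forall fun w => hpt v w))
        _ = ∫ v, (ε⁻¹ * φ ((v - u) / ε)) * ∫ w, (ε⁻¹ * φ ((v - w) / ε)) := by
            simp_rw [integral_const_mul]
        _ = ∫ v, (ε⁻¹ * φ ((v - u) / ε)) :=
            integral_congr_ae (Filter.Eventually.of_forall fun v => by
              show ε⁻¹ * φ ((v - u) / ε) * ∫ w, ε⁻¹ * φ ((v - w) / ε)
                  = ε⁻¹ * φ ((v - u) / ε)
              rw [moll_norm_left hφ_int hε0 v, mul_one])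
        _ = 1 := moll_norm_right hφ_int hε0 u
        _ = chi u uh := (chi_of_lt hlt).symm
    · -- u = uh : the value is 1/2 for every ε > 0
      subst heqc
      filter_upwards [self_mem_nhdsWithin] with ε hεm
      have hε0 : (0:ℝ) < ε := hεm
      have hεne : ε ≠ 0 := ne_of_gt hε0
      -- rewrite the double integral as ∫ v, p v * gg φ ε u v
      have hF : (∫ v, ∫ w, (ε⁻¹ * φ ((v - u) / ε)) * chi w u * (ε⁻¹ * φ ((v - w) / ε)))
          = ∫ v, (ε⁻¹ * φ ((v - u) / ε)) * gg φ ε u v := by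
        refine integral_congr_ae (Filter.Eventually.of_forall fun v => ?_)
        unfold gg
        simp_rw [mul_assoc]
        rw [integral_const_mul, integral_const_mul]
      rw [hF]
      have hintA : Integrable (fun v => (ε⁻¹ * φ ((v - u) / ε)) * gg φ ε u v) := by
        have := (moll_int_right hφint hεne u).bdd_mul (gg_meas hφc ε u)
          (Filter.Eventually.of_forall fun v => gg_norm_le hφint hφ_nonneg hφ_int hε0 u v)
        simpa [mul_comm] using this
      have hggrefl_meas : AEStronglyMeasurable (fun v => gg φ ε u (2*u - v)) volume :=
        (gg_meas hφc ε u).comp_quasiMeasurePreserving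
          (Measure.measurePreserving_sub_left volume (2*u)).quasiMeasurePreserving
      have hintB : Integrable (fun v => (ε⁻¹ * φ ((v - u) / ε)) * gg φ ε u (2*u - v)) := by
        have := (moll_int_right hφint hεne u).bdd_mul hggrefl_meas
          (Filter.Eventually.of_forall fun v => gg_norm_le hφint hφ_nonneg hφ_int hε0 u _)
        simpa [mul_comm] using this
      -- the reflected integral equals the original
      have hAB : (∫ v, (ε⁻¹ * φ ((v - u) / ε)) * gg φ ε u v)
          = ∫ v, (ε⁻¹ * φ ((v - u) / ε)) * gg φ ε u (2*u - v) := by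
        calc (∫ v, (ε⁻¹ * φ ((v - u) / ε)) * gg φ ε u v)
            = ∫ v, (ε⁻¹ * φ ((u - v) / ε)) * gg φ ε u v :=
              integral_congr_ae (Filter.Eventually.of_forall fun v => by
                show ε⁻¹ * φ ((v - u) / ε) * gg φ ε u v
                    = ε⁻¹ * φ ((u - v) / ε) * gg φ ε u v
                rw [show u - v = -(v - u) by ring, neg_div, hφ_even])
          _ = ∫ v, (ε⁻¹ * φ ((u - (2*u - v)) / ε)) * gg φ ε u (2*u - v) :=
              (integral_sub_left_eq_self
                (fun t => (ε⁻¹ * φ ((u - t) / ε)) * gg φ ε u t) volume (2*u)).symm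
          _ = ∫ v, (ε⁻¹ * φ ((v - u) / ε)) * gg φ ε u (2*u - v) :=
              integral_congr_ae (Filter.Eventually.of_forall fun v => by
                show ε⁻¹ * φ ((u - (2*u - v)) / ε) * gg φ ε u (2*u - v)
                    = ε⁻¹ * φ ((v - u) / ε) * gg φ ε u (2*u - v)
                rw [show u - (2*u - v) = v - u by ring])
      -- sum is 1
      have hsum : (∫ v, (ε⁻¹ * φ ((v - u) / ε)) * gg φ ε u v)
          + (∫ v, (ε⁻¹ * φ ((v - u) / ε)) * gg φ ε u (2*u - v)) = 1 := by
        rw [← integral_add hintA hintB]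
        have heq2 : ∀ v : ℝ, (ε⁻¹ * φ ((v - u) / ε)) * gg φ ε u v
            + (ε⁻¹ * φ ((v - u) / ε)) * gg φ ε u (2*u - v) = ε⁻¹ * φ ((v - u) / ε) := by
          intro v
          rw [← mul_add, gg_add_reflect hφint hφ_even hφ_int hε0 u v, mul_one]
        rw [integral_congr_ae (Filter.Eventually.of_forall heq2)]
        exact moll_norm_right hφ_int hε0 u
      rw [← hAB] at hsum
      rw [chi_of_eq rfl]
      linarith
    · -- uh < u : integrand vanishes for small ε
      have hmem : Set.Ioo (0:ℝ) (u - uh) ∈ nhdsWithin 0 (Set.Ioi 0) :=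
        Ioo_mem_nhdsGT_of_mem ⟨le_refl 0, by linarith⟩
      filter_upwards [hmem] with ε hεm
      obtain ⟨hε0, hεlt⟩ := hεm
      have hpt : ∀ v w : ℝ, (ε⁻¹ * φ ((v - u) / ε)) * chi w uh * (ε⁻¹ * φ ((v - w) / ε))
          = 0 := by
        intro v w
        by_cases h1 : φ ((v - u)/ε) = 0
        · rw [h1]; ring
        by_cases h2 : φ ((v - w)/ε) = 0
        · rw [h2]; ring
        obtain ⟨hb1, hb2⟩ := habs ε v u hε0 h1
        obtain ⟨hb3, hb4⟩ := habs ε v w hε0 h2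
        rw [chi_of_gt (show uh < w by linarith)]
        ring
      calc (∫ v, ∫ w, (ε⁻¹ * φ ((v - u) / ε)) * chi w uh * (ε⁻¹ * φ ((v - w) / ε)))
          = ∫ v, ∫ w, (0:ℝ) :=
            integral_congr_ae (Filter.Eventually.of_forall fun v =>
              integral_congr_ae (Filter.Eventually.of_forall fun w => hpt v w))
        _ = 0 := by simp
        _ = chi u uh := (chi_of_gt hgt).symm
  exact Tendsto.congr' main.symm tendsto_const_nhds
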